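/- Every finitely generated torsion-free module over a Bézout domain is free. -/

import Mathlib

/-!
Choosing a maximal linearly independent subfamily of a finite generating set and clearing
denominators embeds a finitely generated torsion-free module `M` into `Rⁿ` via `x ↦ a • x`.
Finitely generated submodules of `Rⁿ` are free by induction on `n`: the projection of such a
submodule `N` to the last factor has finitely generated, hence principal, hence free image, so `N`
splits as that image times the kernel, which is finitely generated and lies in `Rⁿ⁻¹`.
-/

open LinearMap Submodule

def Module.FGSubmodulesFree (R M : Type*) [Semiring R] [AddCommMonoid M] [Module R M] : Prop :=
  ∀ N : Submodule R M, N.FG → Module.Free R N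

namespace Module.FGSubmodulesFree

variable {R M P K : Type*} [Ring R] [AddCommGroup M] [Module R M] [AddCommGroup P] [Module R P]
  [AddCommMonoid K] [Module R K]

theorem free_of_injective (h : FGSubmodulesFree R M) [Module.Finite R K] {f : K →ₗ[R] M}
    (hf : Function.Injective f) : Module.Free R K :=
  have : Module.Free R (range f) := h _ (Module.Finite.iff_fg.1 inferInstance)
  .of_equiv (LinearEquiv.ofInjective f hf).symm

theorem of_linearEquiv (h : FGSubmodulesFree R M) (e : M ≃ₗ[R] P) : FGSubmodulesFree R P :=
  fun N hN ↦
    have : Module.Finite R N := Module.Finite.iff_fg.2 hN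
    h.free_of_injective (f := e.symm.toLinearMap ∘ₗ N.subtype)
      (e.symm.injective.comp N.injective_subtype)

theorem prod (hM : FGSubmodulesFree R M) (hP : FGSubmodulesFree R P) :
    FGSubmodulesFree R (M × P) := by
  intro N hN
  have : Module.Finite R N := Module.Finite.iff_fg.2 hN
  let g := snd R M P ∘ₗ N.subtype
  have : Module.Free R (range g) := hP.free_of_injective (range g).injective_subtype
  obtain ⟨l, hl⟩ := g.rangeRestrict.exists_rightInverse_of_surjective (range_rangeRestrict g)
  obtain ⟨e, -⟩ := (exact_subtype_ker_map g.rangeRestrict).splitSurjectiveEquiv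
    (injective_subtype _) ⟨l, hl⟩
  have : Module.Finite R (ker g.rangeRestrict) :=
    .of_surjective (fst _ _ _ ∘ₗ e.toLinearMap) (Prod.fst_surjective.comp e.surjective)
  have : Module.Free R (ker g.rangeRestrict) := by
    refine hM.free_of_injective
      (f := fst R M P ∘ₗ N.subtype ∘ₗ (ker g.rangeRestrict).subtype) ?_
    have snd_eq_zero (x : ker g.rangeRestrict) : (x : M × P).2 = 0 :=
      congr_arg Subtype.val (mem_ker.1 x.2)
    intro x y hxy
    exact Subtype.ext <| Subtype.ext <| Prod.ext hxy ((snd_eq_zero x).trans (snd_eq_zero y).symm)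
  exact .of_equiv e.symm

end Module.FGSubmodulesFree

namespace IsBezout

variable {R : Type*} [CommRing R] [IsDomain R] [IsBezout R]

theorem fgSubmodulesFree_self : Module.FGSubmodulesFree R R := by
  intro I hI
  obtain ⟨a, rfl⟩ := (isPrincipal_of_FG I hI).principal
  rcases eq_or_ne a 0 with rfl | ha
  · rw [span_singleton_eq_bot.2 rfl]
    infer_instance
  · exact .of_equiv (LinearEquiv.toSpanNonzeroSingleton R R a ha)

theorem fgSubmodulesFree_pi (n : ℕ) : Module.FGSubmodulesFree R (Fin n → R) := by
  induction n with
  | zero => exact fun N _ ↦ inferInstance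
  | succ n ih =>
    exact (fgSubmodulesFree_self.prod ih).of_linearEquiv (Fin.consLinearEquiv R fun _ ↦ R)

end IsBezout

section Embedding

variable {R M : Type*} [CommRing R] [IsDomain R] [AddCommGroup M] [Module R M]

theorem Submodule.exists_smul_mem_of_smul_generators_mem {ι : Type*} [Fintype ι] {s : ι → M}
    {N : Submodule R M} (h : ∀ i, ∃ a : R, a ≠ 0 ∧ a • s i ∈ N) :
    ∃ a : R, a ≠ 0 ∧ ∀ x ∈ span R (Set.range s), a • x ∈ N := by
  choose a ha haN using h
  refine ⟨∏ i, a i, Finset.prod_ne_zero_iff.2 fun i _ ↦ ha i, fun x hx ↦ ?_⟩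
  suffices span R (Set.range s) ≤ N.comap (lsmul R M (∏ i, a i)) from this hx
  refine span_le.2 <| Set.range_subset_iff.2 fun i ↦ ?_
  obtain ⟨c, hc⟩ := Finset.dvd_prod_of_mem a (Finset.mem_univ i)
  change (∏ j, a j) • s i ∈ N
  rw [hc, mul_comm, mul_smul]
  exact N.smul_mem c (haN i)

theorem Module.exists_injective_pi_of_isTorsionFree [Module.Finite R M]
    [Module.IsTorsionFree R M] :
    ∃ (n : ℕ) (f : M →ₗ[R] Fin n → R), Function.Injective f := by
  obtain ⟨k, s, hs⟩ := Module.Finite.exists_fin (R := R) (M := M)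
  obtain ⟨I, hI, hmax⟩ := exists_maximal_linearIndepOn R s
  set N := span R (Set.range fun i : I ↦ s i)
  have : ∀ i, ∃ a : R, a ≠ 0 ∧ a • s i ∈ N := by
    intro i
    by_cases hi : i ∈ I
    · exact ⟨1, one_ne_zero, by simpa using subset_span (Set.mem_range_self (⟨i, hi⟩ : I))⟩
    · simpa [N, ← Set.image_eq_range] using hmax i hi
  obtain ⟨a, ha, haN⟩ := exists_smul_mem_of_smul_generators_mem this
  have : Module.Free R N := .of_basis (Basis.span hI)
  have : Module.Finite R N := .span_of_finite R (Set.finite_range _)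
  refine ⟨_, (Module.finBasis R N).equivFun.toLinearMap ∘ₗ
    (lsmul R M a).codRestrict N fun x ↦ haN x (hs ▸ mem_top), ?_⟩
  exact (Module.finBasis R N).equivFun.injective.comp
    fun x y hxy ↦ smul_right_injective M ha (congr_arg Subtype.val hxy)

end Embedding

/-- Every finitely generated torsion-free module over a Bézout domain is free.
Torsion-freeness over the domain `R` is expressed by `NoZeroSMulDivisors R M`:
`r • m = 0` with `r ≠ 0` implies `m = 0`. -/
theorem free_of_fg_torsionFree_bezout
    {R : Type*} [CommRing R] [IsDomain R] [IsBezout R]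
    {M : Type*} [AddCommGroup M] [Module R M]
    [Module.Finite R M] [NoZeroSMulDivisors R M] :
    Module.Free R M := by
  obtain ⟨n, f, hf⟩ := Module.exists_injective_pi_of_isTorsionFree (R := R) (M := M)
  exact (IsBezout.fgSubmodulesFree_pi n).free_of_injective hf
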